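/- Let N ≥ 1 and let q : ℂ^N → ℝ be a real quadratic form, i.e. q(ζ) = B(ζ,ζ) for a symmetric ℝ-bilinear form B on ℂ^N viewed as a real vector space. Assume q(ζ) + q(iζ) ≥ 0 for all ζ ∈ ℂ^N, and let L ⊆ ℂ^N be a real linear subspace with dim_ℝ L = N on which q is negative definite (q(ζ) < 0 for all ζ ∈ L ∖ {0}). Then: (i) q(ζ) > 0 for all ζ ∈ iL ∖ {0}; (ii) L ∩ iL = {0}, so that ℂ^N = L ⊕ iL as real vector spaces (L is maximally totally real); (iii) the form B is nondegenerate of signature (N, N), i.e. the maximal dimension of a real subspace on which q is negative definite equals N and the maximal dimension of a real subspace on which q is positive definite equals N. -/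

import Mathlib

/-!
Plurisubharmonicity gives `q(iζ) ≥ -q(ζ)`, so `q` is positive definite on the `N`-dimensional
space `iL`. A subspace on which `q` is negative definite meets one on which it is positive
definite only in `0`; inside the `2N`-dimensional real space `ℂ^N` this forces `L ⊕ iL = ℂ^N`
and bounds both indices of `q` by `N`. If `ζ = u + v` with `u ∈ L`, `v ∈ iL` is `B`-orthogonal
to everything, pairing it with `u` and with `v` gives `q(u) = q(v)`, which is both `≤ 0` and
`≥ 0`, so `u = v = 0`.
-/

open Complex

noncomputable section

/-- `ℂ^N` with its Euclidean (Hermitian) norm, regarded also as a real vector space. -/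
abbrev En (N : ℕ) := EuclideanSpace ℂ (Fin N)

/-- Multiplication by `i`, as an `ℝ`-linear map on `ℂ^N`. -/
def smulI (N : ℕ) : En N →ₗ[ℝ] En N where
  toFun ζ := Complex.I • ζ
  map_add' x y := smul_add _ x y
  map_smul' r x := smul_comm Complex.I r x

section Definiteness

variable {V : Type*} [AddCommGroup V] [Module ℝ V]

def NegDefOn (q : V → ℝ) (M : Submodule ℝ V) : Prop := ∀ x ∈ M, x ≠ 0 → q x < 0

def PosDefOn (q : V → ℝ) (M : Submodule ℝ V) : Prop := ∀ x ∈ M, x ≠ 0 → 0 < q x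

theorem NegDefOn.disjoint_of_posDefOn {q : V → ℝ} {M M' : Submodule ℝ V}
    (hM : NegDefOn q M) (hM' : PosDefOn q M') : Disjoint M M' := by
  refine Submodule.disjoint_def.mpr fun x hx hx' => ?_
  by_contra hx0
  exact (hM x hx hx0).not_gt (hM' x hx' hx0)

theorem NegDefOn.finrank_add_le [FiniteDimensional ℝ V] {q : V → ℝ} {M M' : Submodule ℝ V}
    (hM : NegDefOn q M) (hM' : PosDefOn q M') :
    Module.finrank ℝ M + Module.finrank ℝ M' ≤ Module.finrank ℝ V :=
  Submodule.finrank_add_finrank_le_of_disjoint (hM.disjoint_of_posDefOn hM')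

theorem NegDefOn.posDefOn_map {q : V → ℝ} {L : Submodule ℝ V} (hL : NegDefOn q L)
    (J : V →ₗ[ℝ] V) (hJ : ∀ x, 0 ≤ q x + q (J x)) : PosDefOn q (L.map J) := by
  rintro _ ⟨x, hx, rfl⟩ hJx
  have hx0 : x ≠ 0 := by rintro rfl; exact hJx (map_zero J)
  linarith [hL x hx hx0, hJ x]

theorem eq_zero_of_forall_eq_zero_of_negDefOn_of_posDefOn {B : V → V → ℝ}
    (hsymm : ∀ x y, B x y = B y x)
    (haddl : ∀ x₁ x₂ y, B (x₁ + x₂) y = B x₁ y + B x₂ y)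
    {L L' : Submodule ℝ V} (hL : NegDefOn (fun x => B x x) L)
    (hL' : PosDefOn (fun x => B x x) L') (htop : L ⊔ L' = ⊤)
    {z : V} (hz : ∀ y, B z y = 0) : z = 0 := by
  have hB0 : B 0 0 = 0 := by simpa using haddl 0 0 0
  obtain ⟨u, hu, v, hv, rfl⟩ := Submodule.mem_sup.mp (htop ▸ Submodule.mem_top (x := z))
  have hquv : B u u = B v v := by
    linarith [haddl u v u, haddl u v v, hz u, hz v, hsymm u v]
  have hu0 : u = 0 := by
    by_contra hu0
    by_cases hv0 : v = 0
    · subst hv0; linarith [hL u hu hu0]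
    · linarith [hL u hu hu0, hL' v hv hv0]
  subst hu0
  by_contra hv0
  linarith [hL' v hv (by simpa using hv0)]

end Definiteness

theorem finrank_real_En (N : ℕ) : Module.finrank ℝ (En N) = 2 * N := by
  rw [finrank_real_of_complex, finrank_euclideanSpace_fin]

theorem smulI_injective (N : ℕ) : Function.Injective (smulI N) :=
  smul_right_injective (En N) Complex.I_ne_zero

theorem finrank_map_smulI (N : ℕ) (L : Submodule ℝ (En N)) :
    Module.finrank ℝ (L.map (smulI N)) = Module.finrank ℝ L :=
  (Submodule.equivMapOfInjective _ (smulI_injective N) L).finrank_eq.symm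

theorem statement1_general (N : ℕ)
    (B : En N → En N → ℝ)
    (hsymm : ∀ ζ η, B ζ η = B η ζ)
    (haddl : ∀ ζ₁ ζ₂ η, B (ζ₁ + ζ₂) η = B ζ₁ η + B ζ₂ η)
    (hpsh : ∀ ζ, 0 ≤ B ζ ζ + B (Complex.I • ζ) (Complex.I • ζ))
    (L : Submodule ℝ (En N)) (hdim : Module.finrank ℝ L = N)
    (hneg : ∀ ζ ∈ L, ζ ≠ 0 → B ζ ζ < 0) :
    -- (i) `q > 0` on `iL ∖ {0}`
    (∀ ζ ∈ L.map (smulI N), ζ ≠ 0 → 0 < B ζ ζ) ∧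
    -- (ii) `L ∩ iL = {0}` and `ℂ^N = L ⊕ iL`
    (L ⊓ L.map (smulI N) = ⊥ ∧ L ⊔ L.map (smulI N) = ⊤) ∧
    -- (iii) `B` is nondegenerate of signature `(N, N)`
    ((∀ ζ, (∀ η, B ζ η = 0) → ζ = 0) ∧
     (∃ M : Submodule ℝ (En N), Module.finrank ℝ M = N ∧ ∀ ζ ∈ M, ζ ≠ 0 → B ζ ζ < 0) ∧
     (∀ M : Submodule ℝ (En N), (∀ ζ ∈ M, ζ ≠ 0 → B ζ ζ < 0) → Module.finrank ℝ M ≤ N) ∧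
     (∃ M : Submodule ℝ (En N), Module.finrank ℝ M = N ∧ ∀ ζ ∈ M, ζ ≠ 0 → 0 < B ζ ζ) ∧
     (∀ M : Submodule ℝ (En N), (∀ ζ ∈ M, ζ ≠ 0 → 0 < B ζ ζ) → Module.finrank ℝ M ≤ N)) := by
  have hL : NegDefOn (fun ζ => B ζ ζ) L := hneg
  have hiL : PosDefOn (fun ζ => B ζ ζ) (L.map (smulI N)) := hL.posDefOn_map (smulI N) hpsh
  have hdimI : Module.finrank ℝ (L.map (smulI N)) = N := (finrank_map_smulI N L).trans hdim
  have hdisj : Disjoint L (L.map (smulI N)) := hL.disjoint_of_posDefOn hiL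
  have hsup : L ⊔ L.map (smulI N) = ⊤ :=
    Submodule.eq_top_of_disjoint _ _ (by rw [finrank_real_En, hdim, hdimI]; omega) hdisj
  refine ⟨hiL, ⟨hdisj.eq_bot, hsup⟩,
    fun _ hζ => eq_zero_of_forall_eq_zero_of_negDefOn_of_posDefOn hsymm haddl hL hiL hsup hζ,
    ⟨L, hdim, hneg⟩, fun M hM => ?_, ⟨L.map (smulI N), hdimI, hiL⟩, fun M hM => ?_⟩
  · have := NegDefOn.finrank_add_le (q := fun ζ => B ζ ζ) hM hiL
    rw [finrank_real_En, hdimI] at this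
    omega
  · have := hL.finrank_add_le (M' := M) hM
    rw [finrank_real_En, hdim] at this
    omega

/-- let `q(ζ) = B(ζ,ζ)` be a real quadratic form on `ℂ^N` (`B` a symmetric
`ℝ`-bilinear form) with `q(ζ) + q(iζ) ≥ 0` (plurisubharmonicity), and let `L` be a real
subspace of dimension `N` on which `q` is negative definite.  Then `q` is positive definite
on `iL`, `L` is maximally totally real (`L ∩ iL = 0`, `L + iL = ℂ^N`), and `B` is
nondegenerate of signature `(N, N)`. -/
theorem statement1 (N : ℕ) (hN : 1 ≤ N)
    (B : En N → En N → ℝ)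
    (hsymm : ∀ ζ η, B ζ η = B η ζ)
    (haddl : ∀ ζ₁ ζ₂ η, B (ζ₁ + ζ₂) η = B ζ₁ η + B ζ₂ η)
    (hsmull : ∀ (r : ℝ) ζ η, B (r • ζ) η = r * B ζ η)
    (hpsh : ∀ ζ, 0 ≤ B ζ ζ + B (Complex.I • ζ) (Complex.I • ζ))
    (L : Submodule ℝ (En N)) (hdim : Module.finrank ℝ L = N)
    (hneg : ∀ ζ ∈ L, ζ ≠ 0 → B ζ ζ < 0) :
    -- (i) `q > 0` on `iL ∖ {0}`
    (∀ ζ ∈ L.map (smulI N), ζ ≠ 0 → 0 < B ζ ζ) ∧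
    -- (ii) `L ∩ iL = {0}` and `ℂ^N = L ⊕ iL`
    (L ⊓ L.map (smulI N) = ⊥ ∧ L ⊔ L.map (smulI N) = ⊤) ∧
    -- (iii) `B` is nondegenerate of signature `(N, N)`
    ((∀ ζ, (∀ η, B ζ η = 0) → ζ = 0) ∧
     (∃ M : Submodule ℝ (En N), Module.finrank ℝ M = N ∧ ∀ ζ ∈ M, ζ ≠ 0 → B ζ ζ < 0) ∧
     (∀ M : Submodule ℝ (En N), (∀ ζ ∈ M, ζ ≠ 0 → B ζ ζ < 0) → Module.finrank ℝ M ≤ N) ∧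
     (∃ M : Submodule ℝ (En N), Module.finrank ℝ M = N ∧ ∀ ζ ∈ M, ζ ≠ 0 → 0 < B ζ ζ) ∧
     (∀ M : Submodule ℝ (En N), (∀ ζ ∈ M, ζ ≠ 0 → 0 < B ζ ζ) → Module.finrank ℝ M ≤ N)) :=
  statement1_general N B hsymm haddl hpsh L hdim hneg

end
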